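/- arXiv:2105.12864 — 4 statements merged into one kernel-verified Lean document; each statement's English description precedes it below -/
import Mathlib

section
/- Let D be a finite box-connected subgraph of Z^2 with at least one edge. Then the edge boundary of the bounding box of D satisfies |∂ bb(D)| ≤ 2·e(D) + 4. -/
open SimpleGraph

/-- The square lattice `ℤ²`. -/
def Grid : SimpleGraph (ℤ × ℤ) where
  Adj u v := |u.1 - v.1| + |u.2 - v.2| = 1
  symm := ⟨by intro u v h; simpa [abs_sub_comm] using h⟩
  loopless := ⟨by intro u h; simp at h⟩

/-- The edge boundary of a subgraph `H` of `ℤ²`: edges of the lattice not in `H`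
but incident to a vertex of `H`. -/
def edgeBoundary (H : Grid.Subgraph) : Set (Sym2 (ℤ × ℤ)) :=
  {e | e ∈ Grid.edgeSet ∧ e ∉ H.edgeSet ∧ ∃ v ∈ H.verts, v ∈ e}
/-- The box subgraph induced on `{(x,y) : a ≤ x ≤ b, c ≤ y ≤ d}`. -/
def boxSubgraph (a b c d : ℤ) : Grid.Subgraph :=
  (⊤ : Grid.Subgraph).induce {p | a ≤ p.1 ∧ p.1 ≤ b ∧ c ≤ p.2 ∧ p.2 ≤ d}

/-- Bounding box of a set of vertices. -/
noncomputable def bbox (S : Set (ℤ × ℤ)) : Grid.Subgraph :=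
  boxSubgraph (sInf (Prod.fst '' S)) (sSup (Prod.fst '' S))
    (sInf (Prod.snd '' S)) (sSup (Prod.snd '' S))

/-- Two boxes box-intersect if `(E(R₁) ∪ ∂R₁) ∩ E(R₂) ≠ ∅`. -/
def BoxIntersect (R₁ R₂ : Grid.Subgraph) : Prop :=
  ((R₁.edgeSet ∪ edgeBoundary R₁) ∩ R₂.edgeSet).Nonempty

/-- One step of the merging process: replace two distinct box-intersecting boxes
in the collection by the bounding box of their union. -/
inductive MergeStep : Set Grid.Subgraph → Set Grid.Subgraph → Prop
  | step (𝓡 : Set Grid.Subgraph) (R₁ R₂ : Grid.Subgraph) :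
      R₁ ∈ 𝓡 → R₂ ∈ 𝓡 → R₁ ≠ R₂ → BoxIntersect R₁ R₂ →
      MergeStep 𝓡 (insert (bbox (R₁.verts ∪ R₂.verts)) (𝓡 \ {R₁, R₂}))

/-- The collection of bounding boxes of the connected components of `D`. -/
noncomputable def componentBoxes (D : Grid.Subgraph) : Set Grid.Subgraph :=
  {B | ∃ v ∈ D.verts, B = bbox {w | D.spanningCoe.Reachable v w}}

/-- `D` is box-connected if the merging process, started from the bounding boxes of
its connected components, terminates with a single box. -/
def BoxConnected (D : Grid.Subgraph) : Prop :=
  ∃ R : Grid.Subgraph, Relation.ReflTransGen MergeStep (componentBoxes D) {R}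

open Set

noncomputable def phiS (S : Set (ℤ × ℤ)) : ℕ :=
  (sSup (Prod.fst '' S) - sInf (Prod.fst '' S)).toNat +
  (sSup (Prod.snd '' S) - sInf (Prod.snd '' S)).toNat

lemma bbox_verts (S : Set (ℤ × ℤ)) :
    (bbox S).verts = {p : ℤ × ℤ | sInf (Prod.fst '' S) ≤ p.1 ∧ p.1 ≤ sSup (Prod.fst '' S) ∧
      sInf (Prod.snd '' S) ≤ p.2 ∧ p.2 ≤ sSup (Prod.snd '' S)} := rfl

lemma mem_bounds {S : Set (ℤ × ℤ)} (hf : S.Finite) {p : ℤ × ℤ} (hp : p ∈ S) :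
    sInf (Prod.fst '' S) ≤ p.1 ∧ p.1 ≤ sSup (Prod.fst '' S) ∧
    sInf (Prod.snd '' S) ≤ p.2 ∧ p.2 ≤ sSup (Prod.snd '' S) :=
  ⟨csInf_le ((hf.image _).bddBelow) ⟨p, hp, rfl⟩,
   le_csSup ((hf.image _).bddAbove) ⟨p, hp, rfl⟩,
   csInf_le ((hf.image _).bddBelow) ⟨p, hp, rfl⟩,
   le_csSup ((hf.image _).bddAbove) ⟨p, hp, rfl⟩⟩

lemma subset_bbox {S : Set (ℤ × ℤ)} (hf : S.Finite) : S ⊆ (bbox S).verts := by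
  intro p hp; rw [bbox_verts]; exact mem_bounds hf hp

lemma bbox_verts_finite (S : Set (ℤ × ℤ)) : (bbox S).verts.Finite := by
  rw [bbox_verts]
  apply ((Set.finite_Icc (sInf (Prod.fst '' S)) (sSup (Prod.fst '' S))).prod
    (Set.finite_Icc (sInf (Prod.snd '' S)) (sSup (Prod.snd '' S)))).subset
  rintro ⟨x, y⟩ ⟨h1, h2, h3, h4⟩
  exact ⟨⟨h1, h2⟩, ⟨h3, h4⟩⟩

lemma bbox_verts_nonempty {S : Set (ℤ × ℤ)} (hf : S.Finite) (hn : S.Nonempty) :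
    (bbox S).verts.Nonempty := hn.mono (subset_bbox hf)

lemma bbox_verts_eq_prod {S : Set (ℤ × ℤ)} :
    (bbox S).verts = Set.Icc (sInf (Prod.fst '' S)) (sSup (Prod.fst '' S)) ×ˢ
      Set.Icc (sInf (Prod.snd '' S)) (sSup (Prod.snd '' S)) := by
  rw [bbox_verts]; ext ⟨x, y⟩
  simp [Set.mem_prod, Set.mem_Icc]; tauto

lemma phiS_bbox {S : Set (ℤ × ℤ)} (hf : S.Finite) (hn : S.Nonempty) :
    phiS (bbox S).verts = phiS S := by
  obtain ⟨p, hp⟩ := hn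
  obtain ⟨h1, h2, h3, h4⟩ := mem_bounds hf hp
  have hab : sInf (Prod.fst '' S) ≤ sSup (Prod.fst '' S) := le_trans h1 h2
  have hcd : sInf (Prod.snd '' S) ≤ sSup (Prod.snd '' S) := le_trans h3 h4
  rw [phiS, bbox_verts_eq_prod,
    Set.fst_image_prod _ (Set.nonempty_Icc.2 hcd),
    Set.snd_image_prod (Set.nonempty_Icc.2 hab),
    csInf_Icc hab, csSup_Icc hab, csInf_Icc hcd, csSup_Icc hcd, phiS]

lemma phiS_mono {S T : Set (ℤ × ℤ)} (hsub : S ⊆ T) (hT : T.Finite) (hS : S.Nonempty) :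
    phiS S ≤ phiS T := by
  have h1 : sInf (Prod.fst '' T) ≤ sInf (Prod.fst '' S) :=
    csInf_le_csInf (hT.image _).bddBelow (hS.image _) (Set.image_mono hsub)
  have h2 : sSup (Prod.fst '' S) ≤ sSup (Prod.fst '' T) :=
    csSup_le_csSup (hT.image _).bddAbove (hS.image _) (Set.image_mono hsub)
  have h3 : sInf (Prod.snd '' T) ≤ sInf (Prod.snd '' S) :=
    csInf_le_csInf (hT.image _).bddBelow (hS.image _) (Set.image_mono hsub)
  have h4 : sSup (Prod.snd '' S) ≤ sSup (Prod.snd '' T) :=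
    csSup_le_csSup (hT.image _).bddAbove (hS.image _) (Set.image_mono hsub)
  unfold phiS; omega
lemma grid_adj {u v : ℤ × ℤ} (h : Grid.Adj u v) : |u.1 - v.1| + |u.2 - v.2| = 1 := h

lemma walk_cross_x {G : SimpleGraph (ℤ × ℤ)}
    (hG : ∀ u v : ℤ × ℤ, G.Adj u v → |u.1 - v.1| + |u.2 - v.2| = 1)
    {p q : ℤ × ℤ} (W : G.Walk p q) (k : ℤ) :
    p.1 ≤ k → k < q.1 → ∃ y : ℤ, s(((k, y) : ℤ × ℤ), ((k + 1, y) : ℤ × ℤ)) ∈ W.edges := by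
  induction W with
  | nil => exact fun h1 h2 => absurd h2 (not_lt.2 h1)
  | @cons u v w h W ih =>
    intro h1 h2
    by_cases hb : v.1 ≤ k
    · obtain ⟨y, hy⟩ := ih hb h2
      exact ⟨y, by rw [SimpleGraph.Walk.edges_cons]; exact List.mem_cons_of_mem _ hy⟩
    · have hadj := hG _ _ h
      have hco : u.1 = k ∧ v.1 = k + 1 ∧ v.2 = u.2 := by
        rcases abs_cases (u.1 - v.1) with h' | h' <;> rcases abs_cases (u.2 - v.2) with h'' | h'' <;> omega
      refine ⟨u.2, ?_⟩
      have hu : u = ((k, u.2) : ℤ × ℤ) := by rw [Prod.ext_iff]; exact ⟨hco.1, rfl⟩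
      have hv : v = ((k + 1, u.2) : ℤ × ℤ) := by rw [Prod.ext_iff]; exact ⟨hco.2.1, hco.2.2⟩
      rw [SimpleGraph.Walk.edges_cons, ← hu, ← hv]
      exact List.mem_cons_self

lemma walk_cross_y {G : SimpleGraph (ℤ × ℤ)}
    (hG : ∀ u v : ℤ × ℤ, G.Adj u v → |u.1 - v.1| + |u.2 - v.2| = 1)
    {p q : ℤ × ℤ} (W : G.Walk p q) (k : ℤ) :
    p.2 ≤ k → k < q.2 → ∃ x : ℤ, s(((x, k) : ℤ × ℤ), ((x, k + 1) : ℤ × ℤ)) ∈ W.edges := by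
  induction W with
  | nil => exact fun h1 h2 => absurd h2 (not_lt.2 h1)
  | @cons u v w h W ih =>
    intro h1 h2
    by_cases hb : v.2 ≤ k
    · obtain ⟨y, hy⟩ := ih hb h2
      exact ⟨y, by rw [SimpleGraph.Walk.edges_cons]; exact List.mem_cons_of_mem _ hy⟩
    · have hadj := hG _ _ h
      have hco : u.2 = k ∧ v.2 = k + 1 ∧ v.1 = u.1 := by
        rcases abs_cases (u.1 - v.1) with h' | h' <;> rcases abs_cases (u.2 - v.2) with h'' | h'' <;> omega
      refine ⟨u.1, ?_⟩
      have hu : u = ((u.1, k) : ℤ × ℤ) := by rw [Prod.ext_iff]; exact ⟨rfl, hco.1⟩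
      have hv : v = ((u.1, k + 1) : ℤ × ℤ) := by rw [Prod.ext_iff]; exact ⟨hco.2.2, hco.2.1⟩
      rw [SimpleGraph.Walk.edges_cons, ← hu, ← hv]
      exact List.mem_cons_self

lemma reach_mem (D : Grid.Subgraph) :
    ∀ {v w : ℤ × ℤ}, D.spanningCoe.Reachable v w → v ∈ D.verts → w ∈ D.verts := by
  intro v w h
  obtain ⟨W⟩ := h
  induction W with
  | nil => exact fun h => h
  | @cons a b c h' W ih =>
    intro _
    refine ih ?_
    have hD : D.Adj a b := by rw [← SimpleGraph.Subgraph.spanningCoe_adj]; exact h'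
    exact hD.snd_mem

lemma edgeSet_finite (D : Grid.Subgraph) (hfin : D.verts.Finite) : D.edgeSet.Finite := by
  apply ((hfin.prod hfin).image (fun p : (ℤ × ℤ) × (ℤ × ℤ) => s(p.1, p.2))).subset
  intro e
  induction e using Sym2.ind with
  | _ x y =>
    intro he
    have h := SimpleGraph.Subgraph.mem_edgeSet.mp he
    exact ⟨(x, y), ⟨h.fst_mem, h.snd_mem⟩, rfl⟩

/-- Edges of the component of `v`. -/
def CE (D : Grid.Subgraph) (v : ℤ × ℤ) : Set (Sym2 (ℤ × ℤ)) :=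
  {e | e ∈ D.edgeSet ∧ ∀ x ∈ e, D.spanningCoe.Reachable v x}

lemma CE_finite (D : Grid.Subgraph) (hfin : D.verts.Finite) (v : ℤ × ℤ) : (CE D v).Finite :=
  (edgeSet_finite D hfin).subset fun _ he => he.1
lemma spanning_edge {D : Grid.Subgraph} {e : Sym2 (ℤ × ℤ)} (h : e ∈ D.spanningCoe.edgeSet) :
    e ∈ D.edgeSet := by
  induction e using Sym2.ind with
  | _ x y =>
    rw [SimpleGraph.mem_edgeSet] at h
    exact SimpleGraph.Subgraph.mem_edgeSet.mpr (by rw [← SimpleGraph.Subgraph.spanningCoe_adj]; exact h)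

lemma comp_bound (D : Grid.Subgraph) (hfin : D.verts.Finite) {v : ℤ × ℤ} (hv : v ∈ D.verts) :
    phiS {w | D.spanningCoe.Reachable v w} ≤ (CE D v).ncard := by
  classical
  set K := {w | D.spanningCoe.Reachable v w} with hK
  have hGadj : ∀ u w : ℤ × ℤ, D.spanningCoe.Adj u w → |u.1 - w.1| + |u.2 - w.2| = 1 := by
    intro u w h
    have hD : D.Adj u w := by rw [← SimpleGraph.Subgraph.spanningCoe_adj]; exact h
    exact hD.adj_sub
  have hKsub : K ⊆ D.verts := fun w hw => reach_mem D hw hv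
  have hKf : K.Finite := hfin.subset hKsub
  have hKn : K.Nonempty := ⟨v, SimpleGraph.Reachable.refl v⟩
  set a := sInf (Prod.fst '' K) with ha
  set b := sSup (Prod.fst '' K) with hb
  set c := sInf (Prod.snd '' K) with hc
  set d := sSup (Prod.snd '' K) with hd
  obtain ⟨w0, hw0⟩ := id hKn
  obtain ⟨h1, h2, h3, h4⟩ := mem_bounds hKf hw0
  have hab : a ≤ b := le_trans h1 h2
  have hcd : c ≤ d := le_trans h3 h4
  -- membership of walk edges in CE
  have hedge : ∀ {p : ℤ × ℤ} (hp : p ∈ K) {q : ℤ × ℤ} (hq : q ∈ K)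
      (W : D.spanningCoe.Walk p q) (e : Sym2 (ℤ × ℤ)), e ∈ W.edges → e ∈ CE D v := by
    intro p hp q hq W e he
    refine ⟨spanning_edge (W.edges_subset_edgeSet he), ?_⟩
    intro x hx
    induction e using Sym2.ind with
    | _ s t =>
      rcases Sym2.mem_iff.mp hx with rfl | rfl
      · exact hp.trans ⟨W.takeUntil x (W.fst_mem_support_of_mem_edges he)⟩
      · exact hp.trans ⟨W.takeUntil x (W.snd_mem_support_of_mem_edges he)⟩
  have hexx : ∀ k, a ≤ k → k < b → ∃ y : ℤ,
      s(((k, y) : ℤ × ℤ), ((k + 1, y) : ℤ × ℤ)) ∈ CE D v := by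
    intro k hk1 hk2
    obtain ⟨p, hpK, hpa⟩ := (hKn.image Prod.fst).csInf_mem (hKf.image _)
    obtain ⟨q, hqK, hqb⟩ := (hKn.image Prod.fst).csSup_mem (hKf.image _)
    obtain ⟨W⟩ := (hpK : D.spanningCoe.Reachable v p).symm.trans (hqK : D.spanningCoe.Reachable v q)
    obtain ⟨y, hy⟩ := walk_cross_x hGadj W k (by rw [hpa]; exact hk1) (by rw [hqb]; exact hk2)
    exact ⟨y, hedge hpK hqK W _ hy⟩
  have hexy : ∀ k, c ≤ k → k < d → ∃ x : ℤ,
      s(((x, k) : ℤ × ℤ), ((x, k + 1) : ℤ × ℤ)) ∈ CE D v := by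
    intro k hk1 hk2
    obtain ⟨p, hpK, hpa⟩ := (hKn.image Prod.snd).csInf_mem (hKf.image _)
    obtain ⟨q, hqK, hqb⟩ := (hKn.image Prod.snd).csSup_mem (hKf.image _)
    obtain ⟨W⟩ := (hpK : D.spanningCoe.Reachable v p).symm.trans (hqK : D.spanningCoe.Reachable v q)
    obtain ⟨x, hx⟩ := walk_cross_y hGadj W k (by rw [hpa]; exact hk1) (by rw [hqb]; exact hk2)
    exact ⟨x, hedge hpK hqK W _ hx⟩
  have hex' : ∀ k ∈ Finset.Icc a (b - 1), ∃ y : ℤ,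
      s(((k, y) : ℤ × ℤ), ((k + 1, y) : ℤ × ℤ)) ∈ CE D v := by
    intro k hk
    rw [Finset.mem_Icc] at hk
    exact hexx k hk.1 (by omega)
  have hey' : ∀ k ∈ Finset.Icc c (d - 1), ∃ x : ℤ,
      s(((x, k) : ℤ × ℤ), ((x, k + 1) : ℤ × ℤ)) ∈ CE D v := by
    intro k hk
    rw [Finset.mem_Icc] at hk
    exact hexy k hk.1 (by omega)
  choose! fx hfx using hex'
  choose! fy hfy using hey'
  set ψ : ℤ × Bool → Sym2 (ℤ × ℤ) := fun z =>
    if z.2 then s(((fy z.1, z.1) : ℤ × ℤ), ((fy z.1, z.1 + 1) : ℤ × ℤ))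
    else s(((z.1, fx z.1) : ℤ × ℤ), ((z.1 + 1, fx z.1) : ℤ × ℤ)) with hψ
  set SB : Finset (ℤ × Bool) :=
    Finset.Icc a (b - 1) ×ˢ {false} ∪ Finset.Icc c (d - 1) ×ˢ {true} with hSB
  have hmaps : ∀ z ∈ SB, ψ z ∈ CE D v := by
    rintro ⟨k, bo⟩ hz
    rcases Finset.mem_union.mp hz with h | h
    · obtain ⟨hk1, hk2⟩ := Finset.mem_product.mp h
      have : bo = false := Finset.mem_singleton.mp hk2
      subst this
      simpa [hψ] using hfx k hk1
    · obtain ⟨hk1, hk2⟩ := Finset.mem_product.mp h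
      have : bo = true := Finset.mem_singleton.mp hk2
      subst this
      simpa [hψ] using hfy k hk1
  have hinj : Set.InjOn ψ ↑SB := by
    rintro ⟨k, bk⟩ _ ⟨l, bl⟩ _ heq
    cases bk <;> cases bl <;>
      simp [hψ, Sym2.eq_iff, Prod.mk.injEq] at heq ⊢ <;>
      [skip; skip; skip; skip] <;>
      (try generalize fx k = u1 at heq) <;> (try generalize fx l = u2 at heq) <;>
      (try generalize fy k = u3 at heq) <;> (try generalize fy l = u4 at heq) <;>
      omega
  have hdisj : Disjoint (Finset.Icc a (b - 1) ×ˢ ({false} : Finset Bool))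
      (Finset.Icc c (d - 1) ×ˢ ({true} : Finset Bool)) := by
    rw [Finset.disjoint_left]
    rintro ⟨k, bo⟩ h1 h2
    have e1 := Finset.mem_singleton.mp (Finset.mem_product.mp h1).2
    have e2 := Finset.mem_singleton.mp (Finset.mem_product.mp h2).2
    rw [e1] at e2; exact Bool.false_ne_true e2
  have hcard : SB.card = (b - a).toNat + (d - c).toNat := by
    rw [hSB, Finset.card_union_of_disjoint hdisj, Finset.card_product, Finset.card_product,
      Int.card_Icc, Int.card_Icc]
    simp only [Finset.card_singleton, mul_one]; omega
  have : phiS K = SB.card := by rw [hcard]; rfl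
  rw [this]
  calc (SB.card : ℕ) = (↑SB : Set (ℤ × Bool)).ncard := (Set.ncard_coe_finset SB).symm
    _ = (ψ '' ↑SB).ncard := (Set.ncard_image_of_injOn hinj).symm
    _ ≤ (CE D v).ncard := Set.ncard_le_ncard
        (by rintro e ⟨z, hz, rfl⟩; exact hmaps z hz) (CE_finite D hfin v)
/-- The invariant preserved by the merging process. -/
def MInv (D : Grid.Subgraph) (C : Set Grid.Subgraph) : Prop :=
  ∃ F : Finset Grid.Subgraph, ↑F = C ∧
    (∀ R ∈ F, R.verts.Finite ∧ R.verts.Nonempty) ∧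
    (D.verts ⊆ ⋃ R ∈ F, (R : Grid.Subgraph).verts) ∧
    ∑ R ∈ F, phiS (R : Grid.Subgraph).verts ≤ D.edgeSet.ncard

lemma inv_init (D : Grid.Subgraph) (hfin : D.verts.Finite) : MInv D (componentBoxes D) := by
  classical
  set g : ℤ × ℤ → Grid.Subgraph := fun v => bbox {w | D.spanningCoe.Reachable v w} with hg
  refine ⟨hfin.toFinset.image g, ?_, ?_, ?_, ?_⟩
  · ext B
    simp only [Finset.coe_image, Set.mem_image, Set.Finite.coe_toFinset, componentBoxes,
      Set.mem_setOf_eq]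
    constructor
    · rintro ⟨v, hv, rfl⟩; exact ⟨v, hv, rfl⟩
    · rintro ⟨v, hv, rfl⟩; exact ⟨v, hv, rfl⟩
  · intro B hB
    obtain ⟨v, hv, rfl⟩ := Finset.mem_image.mp hB
    rw [Set.Finite.mem_toFinset] at hv
    have hsub : {w | D.spanningCoe.Reachable v w} ⊆ D.verts := fun w hw => reach_mem D hw hv
    have hKf := hfin.subset hsub
    have hKn : Set.Nonempty {w | D.spanningCoe.Reachable v w} := ⟨v, SimpleGraph.Reachable.refl v⟩
    exact ⟨(bbox_verts_finite _), bbox_verts_nonempty hKf hKn⟩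
  · intro v hv
    have hKf := hfin.subset (fun w hw => reach_mem D hw hv :
      {w | D.spanningCoe.Reachable v w} ⊆ D.verts)
    refine Set.mem_biUnion (Finset.mem_image.mpr ⟨v, Set.Finite.mem_toFinset hfin |>.mpr hv, rfl⟩) ?_
    exact subset_bbox hKf (SimpleGraph.Reachable.refl v)
  · -- the sum bound
    set F := hfin.toFinset.image g with hF
    have hrep : ∀ B ∈ F, ∃ v, v ∈ D.verts ∧ B = g v := by
      intro B hB
      obtain ⟨v, hv, rfl⟩ := Finset.mem_image.mp hB
      exact ⟨v, (Set.Finite.mem_toFinset hfin).mp hv, rfl⟩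
    choose! rep hrep1 hrep2 using hrep
    have hE := edgeSet_finite D hfin
    -- each box's phi is bounded by the card of its component's edges
    have hbnd : ∀ B ∈ F, phiS B.verts ≤ ((CE_finite D hfin (rep B)).toFinset).card := by
      intro B hB
      have hv := hrep1 B hB
      have hKsub : {w | D.spanningCoe.Reachable (rep B) w} ⊆ D.verts :=
        fun w hw => reach_mem D hw hv
      have hKf := hfin.subset hKsub
      have hKn : Set.Nonempty {w | D.spanningCoe.Reachable (rep B) w} :=
        ⟨rep B, SimpleGraph.Reachable.refl _⟩
      have hBeq : B = bbox {w | D.spanningCoe.Reachable (rep B) w} := by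
        conv_lhs => rw [hrep2 B hB]
      calc phiS B.verts = phiS {w | D.spanningCoe.Reachable (rep B) w} :=
            (congrArg (fun R : Grid.Subgraph => phiS R.verts) hBeq).trans (phiS_bbox hKf hKn)
        _ ≤ (CE D (rep B)).ncard := comp_bound D hfin hv
        _ = ((CE_finite D hfin (rep B)).toFinset).card :=
            Set.ncard_eq_toFinset_card _ _
    have hdisj : ∀ B ∈ F, ∀ B' ∈ F, B ≠ B' →
        Disjoint ((CE_finite D hfin (rep B)).toFinset) ((CE_finite D hfin (rep B')).toFinset) := by
      intro B hB B' hB' hne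
      rw [Finset.disjoint_left]
      intro e he he'
      rw [Set.Finite.mem_toFinset] at he he'
      have hr : D.spanningCoe.Reachable (rep B) (Quot.out e).1 := he.2 _ (Sym2.out_fst_mem e)
      have hr' : D.spanningCoe.Reachable (rep B') (Quot.out e).1 := he'.2 _ (Sym2.out_fst_mem e)
      have hreach : D.spanningCoe.Reachable (rep B) (rep B') := hr.trans hr'.symm
      have hKeq : {w | D.spanningCoe.Reachable (rep B) w}
          = {w | D.spanningCoe.Reachable (rep B') w} := by
        ext w
        exact ⟨fun h => hreach.symm.trans h, fun h => hreach.trans h⟩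
      exact hne (by rw [hrep2 B hB, hrep2 B' hB', hg]; simp only; rw [hKeq])
    calc ∑ R ∈ F, phiS R.verts ≤ ∑ R ∈ F, ((CE_finite D hfin (rep R)).toFinset).card :=
          Finset.sum_le_sum hbnd
      _ = (F.biUnion (fun R => (CE_finite D hfin (rep R)).toFinset)).card :=
          (Finset.card_biUnion hdisj).symm
      _ ≤ hE.toFinset.card := by
          apply Finset.card_le_card
          intro e he
          obtain ⟨R, hR, heR⟩ := Finset.mem_biUnion.mp he
          rw [Set.Finite.mem_toFinset] at heR ⊢
          exact heR.1
      _ = D.edgeSet.ncard := (Set.ncard_eq_toFinset_card _ _).symm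
lemma box_intersect_vert {R₁ R₂ : Grid.Subgraph} (h : BoxIntersect R₁ R₂) :
    ∃ v, v ∈ R₁.verts ∧ v ∈ R₂.verts := by
  obtain ⟨e, he1, he2⟩ := h
  rcases he1 with he1 | he1
  · -- e in both edge sets
    induction e using Sym2.ind with
    | _ x y =>
      exact ⟨x, (SimpleGraph.Subgraph.mem_edgeSet.mp he1).fst_mem,
        (SimpleGraph.Subgraph.mem_edgeSet.mp he2).fst_mem⟩
  · obtain ⟨-, -, v, hv, hve⟩ := he1
    refine ⟨v, hv, ?_⟩
    induction e using Sym2.ind with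
    | _ x y =>
      have h2 := SimpleGraph.Subgraph.mem_edgeSet.mp he2
      rcases Sym2.mem_iff.mp hve with rfl | rfl
      · exact h2.fst_mem
      · exact h2.snd_mem

lemma phi_merge {R₁ R₂ : Grid.Subgraph} (h1f : R₁.verts.Finite) (h1n : R₁.verts.Nonempty)
    (h2f : R₂.verts.Finite) (h2n : R₂.verts.Nonempty) (hint : BoxIntersect R₁ R₂) :
    phiS (bbox (R₁.verts ∪ R₂.verts)).verts ≤ phiS R₁.verts + phiS R₂.verts := by
  obtain ⟨v, hv1, hv2⟩ := box_intersect_vert hint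
  rw [phiS_bbox (h1f.union h2f) (h1n.mono Set.subset_union_left)]
  obtain ⟨a1, b1, c1, d1⟩ := mem_bounds h1f hv1
  obtain ⟨a2, b2, c2, d2⟩ := mem_bounds h2f hv2
  unfold phiS
  rw [Set.image_union, Set.image_union,
    csInf_union (h1f.image _).bddBelow (h1n.image _) (h2f.image _).bddBelow (h2n.image _),
    csSup_union (h1f.image _).bddAbove (h1n.image _) (h2f.image _).bddAbove (h2n.image _),
    csInf_union (h1f.image _).bddBelow (h1n.image _) (h2f.image _).bddBelow (h2n.image _),
    csSup_union (h1f.image _).bddAbove (h1n.image _) (h2f.image _).bddAbove (h2n.image _)]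
  rcases min_cases (sInf (Prod.fst '' R₁.verts)) (sInf (Prod.fst '' R₂.verts)) with ⟨hm1, _⟩|⟨hm1, _⟩ <;>
    rcases min_cases (sInf (Prod.snd '' R₁.verts)) (sInf (Prod.snd '' R₂.verts)) with ⟨hm2, _⟩|⟨hm2, _⟩ <;>
    rcases max_cases (sSup (Prod.fst '' R₁.verts)) (sSup (Prod.fst '' R₂.verts)) with ⟨hM1, _⟩|⟨hM1, _⟩ <;>
    rcases max_cases (sSup (Prod.snd '' R₁.verts)) (sSup (Prod.snd '' R₂.verts)) with ⟨hM2, _⟩|⟨hM2, _⟩ <;>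
    rw [hm1, hm2, hM1, hM2] <;> omega

lemma inv_step (D : Grid.Subgraph) {C C' : Set Grid.Subgraph}
    (hI : MInv D C) (hstep : MergeStep C C') : MInv D C' := by
  classical
  obtain ⟨F, hFC, hprops, hcover, hsum⟩ := hI
  obtain ⟨R₁, R₂, hR₁, hR₂, hne, hint⟩ := hstep
  have hR₁F : R₁ ∈ F := by rw [← Finset.mem_coe, hFC]; exact hR₁
  have hR₂F : R₂ ∈ F := by rw [← Finset.mem_coe, hFC]; exact hR₂
  obtain ⟨h1f, h1n⟩ := hprops R₁ hR₁F
  obtain ⟨h2f, h2n⟩ := hprops R₂ hR₂F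
  set B := bbox (R₁.verts ∪ R₂.verts) with hB
  refine ⟨insert B (F \ {R₁, R₂}), ?_, ?_, ?_, ?_⟩
  · rw [Finset.coe_insert, Finset.coe_sdiff, hFC]
    norm_num
  · intro R hR
    rcases Finset.mem_insert.mp hR with rfl | hR
    · exact ⟨bbox_verts_finite _, bbox_verts_nonempty (h1f.union h2f)
        (h1n.mono Set.subset_union_left)⟩
    · exact hprops R (Finset.mem_sdiff.mp hR).1
  · intro v hv
    obtain ⟨s, hs, hvs⟩ := Set.mem_iUnion₂.mp (hcover hv)
    by_cases hcase : s = R₁ ∨ s = R₂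
    · apply Set.mem_biUnion (Finset.mem_insert_self B _)
      apply subset_bbox (h1f.union h2f)
      rcases hcase with rfl | rfl
      · exact Set.mem_union_left _ hvs
      · exact Set.mem_union_right _ hvs
    · push_neg at hcase
      exact Set.mem_biUnion (Finset.mem_insert_of_mem
        (Finset.mem_sdiff.mpr ⟨hs, by simp [hcase.1, hcase.2]⟩)) hvs
  · have hpair : ({R₁, R₂} : Finset Grid.Subgraph) ⊆ F := by
      intro x hx
      rcases Finset.mem_insert.mp hx with rfl | hx
      · exact hR₁F
      · rw [Finset.mem_singleton.mp hx]; exact hR₂F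
    have hsplit : ∑ R ∈ F \ {R₁, R₂}, phiS R.verts + (phiS R₁.verts + phiS R₂.verts)
        = ∑ R ∈ F, phiS R.verts := by
      have h2 : ∑ R ∈ ({R₁, R₂} : Finset Grid.Subgraph), phiS R.verts
          = phiS R₁.verts + phiS R₂.verts := Finset.sum_pair hne
      rw [← h2]
      exact Finset.sum_sdiff hpair
    have hins : ∑ R ∈ insert B (F \ {R₁, R₂}), phiS R.verts
        ≤ phiS B.verts + ∑ R ∈ F \ {R₁, R₂}, phiS R.verts := by
      by_cases hBmem : B ∈ F \ {R₁, R₂}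
      · rw [Finset.insert_eq_self.mpr hBmem]; exact Nat.le_add_left _ _
      · rw [Finset.sum_insert hBmem]
    have hφ := phi_merge h1f h1n h2f h2n hint
    rw [← hB] at hφ
    omega
lemma boundary_count {S : Set (ℤ × ℤ)} (hf : S.Finite) (hn : S.Nonempty) :
    (edgeBoundary (bbox S)).ncard ≤ 2 * phiS S + 4 := by
  classical
  set a := sInf (Prod.fst '' S) with ha
  set b := sSup (Prod.fst '' S) with hb
  set c := sInf (Prod.snd '' S) with hc
  set d := sSup (Prod.snd '' S) with hd
  obtain ⟨p, hp⟩ := hn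
  obtain ⟨h1, h2, h3, h4⟩ := mem_bounds hf hp
  have hab : a ≤ b := le_trans h1 h2
  have hcd : c ≤ d := le_trans h3 h4
  set T : Finset (ℤ × ℤ) :=
    ({a - 1, b + 1} : Finset ℤ) ×ˢ Finset.Icc c d ∪ Finset.Icc a b ×ˢ ({c - 1, d + 1} : Finset ℤ)
    with hT
  set f : ℤ × ℤ → Sym2 (ℤ × ℤ) :=
    fun u => s(u, ((max a (min b u.1), max c (min d u.2)) : ℤ × ℤ)) with hfdef
  have hsub : edgeBoundary (bbox S) ⊆ f '' ↑T := by
    intro e he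
    induction e using Sym2.ind with
    | _ x y =>
      obtain ⟨hadj, hnotin, v, hv, hve⟩ := he
      rw [SimpleGraph.mem_edgeSet] at hadj
      have hadj' : |x.1 - y.1| + |x.2 - y.2| = 1 := hadj
      have hnadj : ¬ (bbox S).Adj x y := fun h => hnotin (SimpleGraph.Subgraph.mem_edgeSet.mpr h)
      rw [bbox_verts] at hv
      simp only [Set.mem_setOf_eq] at hv
      -- (bbox S).Adj x y ↔ x ∈ box ∧ y ∈ box ∧ Grid.Adj x y
      have hbadj : ¬ ((a ≤ x.1 ∧ x.1 ≤ b ∧ c ≤ x.2 ∧ x.2 ≤ d) ∧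
          (a ≤ y.1 ∧ y.1 ≤ b ∧ c ≤ y.2 ∧ y.2 ≤ d)) := by
        intro ⟨hx, hy⟩
        exact hnadj (by
          rw [bbox, boxSubgraph, SimpleGraph.Subgraph.induce_adj]
          exact ⟨hx, hy, SimpleGraph.Subgraph.top_adj.mpr hadj⟩)
      rcases Sym2.mem_iff.mp hve with rfl | rfl
      · -- v = x is inside, so y is outside
        have hyout : ¬ (a ≤ y.1 ∧ y.1 ≤ b ∧ c ≤ y.2 ∧ y.2 ≤ d) := fun h => hbadj ⟨hv, h⟩
        push_neg at hyout
        refine ⟨y, ?_, ?_⟩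
        · rw [hT]
          simp only [Finset.coe_union, Finset.coe_product, Set.mem_union, Set.mem_prod,
            Finset.coe_insert, Finset.coe_singleton, Set.mem_insert_iff, Set.mem_singleton_iff,
            Finset.coe_Icc, Set.mem_Icc]
          rcases abs_cases (v.1 - y.1) with h' | h' <;> rcases abs_cases (v.2 - y.2) with h'' | h'' <;> omega
        · have : ((max a (min b y.1), max c (min d y.2)) : ℤ × ℤ) = v := by
            rw [Prod.ext_iff]
            constructor <;>
              (rcases abs_cases (v.1 - y.1) with h' | h' <;> rcases abs_cases (v.2 - y.2) with h'' | h'' <;> omega)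
          show s(y, ((max a (min b y.1), max c (min d y.2)) : ℤ × ℤ)) = s(v, y)
          rw [this]
          exact Sym2.eq_swap
      · -- v = y is inside, so x is outside
        have hxout : ¬ (a ≤ x.1 ∧ x.1 ≤ b ∧ c ≤ x.2 ∧ x.2 ≤ d) := fun h => hbadj ⟨h, hv⟩
        push_neg at hxout
        refine ⟨x, ?_, ?_⟩
        · rw [hT]
          simp only [Finset.coe_union, Finset.coe_product, Set.mem_union, Set.mem_prod,
            Finset.coe_insert, Finset.coe_singleton, Set.mem_insert_iff, Set.mem_singleton_iff,
            Finset.coe_Icc, Set.mem_Icc]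
          rcases abs_cases (x.1 - v.1) with h' | h' <;> rcases abs_cases (x.2 - v.2) with h'' | h'' <;> omega
        · have : ((max a (min b x.1), max c (min d x.2)) : ℤ × ℤ) = v := by
            rw [Prod.ext_iff]
            constructor <;>
              (rcases abs_cases (x.1 - v.1) with h' | h' <;> rcases abs_cases (x.2 - v.2) with h'' | h'' <;> omega)
          show s(x, ((max a (min b x.1), max c (min d x.2)) : ℤ × ℤ)) = s(x, v)
          rw [this]
  have hTcard : T.card ≤ 2 * ((b - a).toNat + (d - c).toNat) + 4 := by
    have e1 : ({a - 1, b + 1} : Finset ℤ).card ≤ 2 := Finset.card_insert_le _ _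
    have e2 : ({c - 1, d + 1} : Finset ℤ).card ≤ 2 := Finset.card_insert_le _ _
    calc T.card ≤ (({a - 1, b + 1} : Finset ℤ) ×ˢ Finset.Icc c d).card
          + (Finset.Icc a b ×ˢ ({c - 1, d + 1} : Finset ℤ)).card := Finset.card_union_le _ _
      _ = ({a - 1, b + 1} : Finset ℤ).card * (Finset.Icc c d).card
          + (Finset.Icc a b).card * ({c - 1, d + 1} : Finset ℤ).card := by
            rw [Finset.card_product, Finset.card_product]
      _ ≤ 2 * (Finset.Icc c d).card + (Finset.Icc a b).card * 2 := by
            exact Nat.add_le_add (Nat.mul_le_mul e1 le_rfl) (Nat.mul_le_mul le_rfl e2)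
      _ ≤ 2 * ((b - a).toNat + (d - c).toNat) + 4 := by
            rw [Int.card_Icc, Int.card_Icc]; omega
  calc (edgeBoundary (bbox S)).ncard ≤ (f '' ↑T).ncard :=
        Set.ncard_le_ncard hsub ((T.finite_toSet).image f)
    _ ≤ (↑T : Set (ℤ × ℤ)).ncard := Set.ncard_image_le T.finite_toSet
    _ = T.card := Set.ncard_coe_finset T
    _ ≤ 2 * ((b - a).toNat + (d - c).toNat) + 4 := hTcard
    _ = 2 * phiS S + 4 := by rw [phiS]


/-- For a finite box-connected subgraph `D` of `ℤ²` with at least one edge,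
`|∂ bb(D)| ≤ 2 e(D) + 4`. -/
theorem edgeBoundary_bbox_of_boxConnected (D : Grid.Subgraph)
    (hfin : D.verts.Finite) (hne : D.edgeSet.Nonempty) (hbc : BoxConnected D) :
    (edgeBoundary (bbox D.verts)).ncard ≤ 2 * D.edgeSet.ncard + 4 := by
  classical
  obtain ⟨R, hR⟩ := hbc
  have key : ∀ C', Relation.ReflTransGen MergeStep (componentBoxes D) C' → MInv D C' := by
    intro C' h
    induction h with
    | refl => exact inv_init D hfin
    | tail _ hstep ih => exact inv_step D ih hstep
  have hInv : MInv D {R} := key {R} hR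
  obtain ⟨F, hFC, hprops, hcover, hsum⟩ := hInv
  rw [Finset.coe_eq_singleton] at hFC
  subst hFC
  have hRmem : R ∈ ({R} : Finset Grid.Subgraph) := Finset.mem_singleton_self R
  obtain ⟨hRf, hRn⟩ := hprops R hRmem
  have hcov : D.verts ⊆ R.verts := by
    intro v hv
    obtain ⟨s, hs, hvs⟩ := Set.mem_iUnion₂.mp (hcover hv)
    rwa [Finset.mem_singleton.mp hs] at hvs
  have hsum' : phiS R.verts ≤ D.edgeSet.ncard := by
    rwa [Finset.sum_singleton] at hsum
  have hDvn : D.verts.Nonempty := by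
    obtain ⟨e, he⟩ := hne
    induction e using Sym2.ind with
    | _ x y => exact ⟨x, (SimpleGraph.Subgraph.mem_edgeSet.mp he).fst_mem⟩
  calc (edgeBoundary (bbox D.verts)).ncard ≤ 2 * phiS D.verts + 4 := boundary_count hfin hDvn
    _ ≤ 2 * phiS R.verts + 4 := by
        have := phiS_mono hcov hRf hDvn
        omega
    _ ≤ 2 * D.edgeSet.ncard + 4 := by omega
end

section
/- Let C be a finite connected subgraph of Z^2 and let e = {(x,y),(x+1,y)} ∈ ∂C be a horizontal boundary edge such that either {(x-1,y),(x,y)} ∈ E(C) or {(x,y),(x,y+1)} ∈ E(C). Then ∂(C+e) \ ∂C is contained in the set { {(x+1,y),(x+2,y)}, {(x+1,y),(x+1,y-1)}, {(x+1,y),(x+1,y+1)} }; in particular at most 3 new boundary edges are created by adding e. -/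
open SimpleGraph

lemma Grid.adj_cases {a b : ℤ} {w : ℤ × ℤ} (h : Grid.Adj (a, b) w) :
    w = (a + 1, b) ∨ w = (a - 1, b) ∨ w = (a, b + 1) ∨ w = (a, b - 1) := by
  obtain ⟨c, d⟩ := w
  simp only [Grid] at h
  simp only [Prod.mk.injEq]
  rcases abs_cases (a - c) with ⟨_, _⟩ | ⟨_, _⟩ <;>
    rcases abs_cases (b - d) with ⟨_, _⟩ | ⟨_, _⟩ <;> omega

/-- Since `u` already lies in `C`, an edge that becomes a boundary edge only after adding
`uv` cannot touch `C`, so it must hang off the new vertex `v`. -/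
lemma exists_eq_of_mem_edgeBoundary_sup_subgraphOfAdj_diff {C : Grid.Subgraph}
    {u v : ℤ × ℤ} (h : Grid.Adj u v) (hu : u ∈ C.verts) {f : Sym2 (ℤ × ℤ)}
    (hf : f ∈ edgeBoundary (C ⊔ Grid.subgraphOfAdj h) \ edgeBoundary C) :
    ∃ w, Grid.Adj v w ∧ w ≠ u ∧ f = s(v, w) := by
  obtain ⟨⟨hfG, hfnot, z, hz, hzf⟩, hfold⟩ := hf
  have hfC : f ∉ C.edgeSet := fun hc => hfnot (Subgraph.edgeSet_mono le_sup_left hc)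
  have hCf : ∀ c ∈ C.verts, c ∉ f := fun c hc hcf => hfold ⟨hfG, hfC, c, hc, hcf⟩
  have hzv : z = v := by
    simp only [Subgraph.verts_sup, subgraphOfAdj_verts, Set.mem_union,
      Set.mem_insert_iff, Set.mem_singleton_iff] at hz
    rcases hz with hz | rfl | rfl
    · exact absurd hzf (hCf z hz)
    · exact absurd hzf (hCf _ hu)
    · rfl
  subst hzv
  obtain ⟨w, rfl⟩ := Sym2.mem_iff_exists.mp hzf
  refine ⟨w, hfG, ?_, rfl⟩
  rintro rfl
  exact hfnot (Subgraph.edgeSet_mono le_sup_right (by simp [Sym2.eq_swap]))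

theorem new_boundary_edges_subset_general (C : Grid.Subgraph) (x y : ℤ) (h : Grid.Adj (x, y) (x + 1, y))
    (hprev : s((x - 1, y), (x, y)) ∈ C.edgeSet ∨ s((x, y), (x, y + 1)) ∈ C.edgeSet) :
    edgeBoundary (C ⊔ Grid.subgraphOfAdj h) \ edgeBoundary C ⊆
      {s((x + 1, y), (x + 2, y)), s((x + 1, y), (x + 1, y - 1)),
        s((x + 1, y), (x + 1, y + 1))} := by
  intro f hf
  have hxy : (x, y) ∈ C.verts :=
    hprev.elim (fun hp => (C.mem_edgeSet.mp hp).snd_mem)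
      (fun hp => (C.mem_edgeSet.mp hp).fst_mem)
  obtain ⟨w, hw, hwx, rfl⟩ := exists_eq_of_mem_edgeBoundary_sup_subgraphOfAdj_diff h hxy hf
  rcases Grid.adj_cases hw with rfl | rfl | rfl | rfl
  · left; norm_num [add_assoc]
  · simp at hwx
  · right; right; rfl
  · right; left; rfl

/-- When Maker adds a horizontal boundary edge `{(x,y),(x+1,y)}` to her connected
component `C`, where `{(x-1,y),(x,y)} ∈ E(C)` or `{(x,y),(x,y+1)} ∈ E(C)`, the new
boundary edges are among the three edges at the vertex `(x+1,y)` away from `C`. -/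
theorem new_boundary_edges_subset (C : Grid.Subgraph) (hconn : C.Connected)
    (hfin : C.verts.Finite) (x y : ℤ) (h : Grid.Adj (x, y) (x + 1, y))
    (he : s((x, y), (x + 1, y)) ∈ edgeBoundary C)
    (hprev : s((x - 1, y), (x, y)) ∈ C.edgeSet ∨ s((x, y), (x, y + 1)) ∈ C.edgeSet) :
    edgeBoundary (C ⊔ Grid.subgraphOfAdj h) \ edgeBoundary C ⊆
      {s((x + 1, y), (x + 2, y)), s((x + 1, y), (x + 1, y - 1)),
        s((x + 1, y), (x + 1, y + 1))} :=
  new_boundary_edges_subset_general C x y h hprev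
end

section
/- Let P = v_0, v_1, ..., v_ℓ be a path in Z^2 starting at the origin v_0 = (0,0) that is not unbarred (i.e., P uses at least three of the four lattice directions, equivalently uses two opposite directions), and let k be maximal such that the subpath v_0,...,v_k is unbarred. Then 2 ≤ k ≤ ℓ−1, and the two consecutive edges {v_{k-1},v_k} and {v_k,v_{k+1}} are one vertical and one horizontal edge forming a pair in the barrier pairing (in particular v_k is non-axial). -/
open SimpleGraph

/-- The barrier pairing: for a non-axial vertex `(x,y)`, the vertical edge from
`(x,y)` towards the x-axis is paired with the horizontal edge from `(x,y)` towards
the y-axis.  `Paired e f` says `e` is the vertical and `f` the horizontal edge of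
such a pair. -/
def Paired (e f : Sym2 (ℤ × ℤ)) : Prop :=
  ∃ x y : ℤ, x ≠ 0 ∧ y ≠ 0 ∧
    e = s(((x, y) : ℤ × ℤ), (x, y - Int.sign y)) ∧
    f = s(((x, y) : ℤ × ℤ), (x - Int.sign x, y))

/-- A length-`n` initial segment of the walk `v` is unbarred: all its steps lie in
one of the direction sets {N,E}, {N,W}, {S,E}, {S,W}. -/
def UnbarredOn (v : ℕ → ℤ × ℤ) (n : ℕ) : Prop :=
  ∃ a b : ℤ, (a = 1 ∨ a = -1) ∧ (b = 1 ∨ b = -1) ∧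
    ∀ i < n, v (i + 1) - v i = (a, 0) ∨ v (i + 1) - v i = (0, b)

private lemma unbarred_mono {v : ℕ → ℤ × ℤ} {m n : ℕ} (h : UnbarredOn v m) (hn : n ≤ m) :
    UnbarredOn v n := by
  obtain ⟨a, b, ha, hb, hs⟩ := h
  exact ⟨a, b, ha, hb, fun i hi => hs i (lt_of_lt_of_le hi hn)⟩

private lemma comp_eq {u w : ℤ × ℤ} {c d : ℤ} (h : u - w = (c, d)) :
    u.1 = w.1 + c ∧ u.2 = w.2 + d := by
  constructor
  · have := congrArg Prod.fst h
    simp only [Prod.fst_sub] at this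
    omega
  · have := congrArg Prod.snd h
    simp only [Prod.snd_sub] at this
    omega

private lemma mono_fst {v : ℕ → ℤ × ℤ} {a b : ℤ} {k : ℕ}
    (ha : a = 1 ∨ a = -1)
    (hs : ∀ i < k, v (i + 1) - v i = (a, 0) ∨ v (i + 1) - v i = (0, b)) :
    ∀ n m, n + m ≤ k → a * (v n).1 ≤ a * (v (n + m)).1 := by
  intro n m
  induction m with
  | zero => simp
  | succ m ih =>
    intro hle
    have h1 : a * (v n).1 ≤ a * (v (n + m)).1 := ih (by omega)
    have haa : a * a = 1 := by rcases ha with rfl | rfl <;> norm_num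
    have hnm : n + (m + 1) = (n + m) + 1 := by omega
    rw [hnm]
    rcases hs (n + m) (by omega) with h | h
    · have h2 := (comp_eq h).1
      calc a * (v n).1 ≤ a * (v (n + m)).1 := h1
        _ ≤ a * (v (n + m)).1 + 1 := by omega
        _ = a * (v (n + m + 1)).1 := by rw [h2, mul_add, haa]
    · have h2 := (comp_eq h).1
      have h2' : (v (n + m + 1)).1 = (v (n + m)).1 := by omega
      rw [h2']
      exact h1

private lemma mono_snd {v : ℕ → ℤ × ℤ} {a b : ℤ} {k : ℕ}
    (hb : b = 1 ∨ b = -1)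
    (hs : ∀ i < k, v (i + 1) - v i = (a, 0) ∨ v (i + 1) - v i = (0, b)) :
    ∀ n m, n + m ≤ k → b * (v n).2 ≤ b * (v (n + m)).2 := by
  intro n m
  induction m with
  | zero => simp
  | succ m ih =>
    intro hle
    have h1 : b * (v n).2 ≤ b * (v (n + m)).2 := ih (by omega)
    have hbb : b * b = 1 := by rcases hb with rfl | rfl <;> norm_num
    have hnm : n + (m + 1) = (n + m) + 1 := by omega
    rw [hnm]
    rcases hs (n + m) (by omega) with h | h
    · have h2 := (comp_eq h).2
      have h2' : (v (n + m + 1)).2 = (v (n + m)).2 := by omega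
      rw [h2']
      exact h1
    · have h2 := (comp_eq h).2
      calc b * (v n).2 ≤ b * (v (n + m)).2 := h1
        _ ≤ b * (v (n + m)).2 + 1 := by omega
        _ = b * (v (n + m + 1)).2 := by rw [h2, mul_add, hbb]

/-- If a path in `ℤ²` from the origin is not unbarred, and `k` is maximal with the
prefix `v 0, …, v k` unbarred, then `2 ≤ k ≤ ℓ - 1`, the vertex `v k` is non-axial,
and the edges `{v (k-1), v k}` and `{v k, v (k+1)}` form a barrier pair. -/
theorem break_step_is_paired (ℓ k : ℕ) (v : ℕ → ℤ × ℤ) (hstart : v 0 = (0, 0))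
    (hdir : ∀ i < ℓ, v (i + 1) - v i = (1, 0) ∨ v (i + 1) - v i = (-1, 0) ∨
      v (i + 1) - v i = (0, 1) ∨ v (i + 1) - v i = (0, -1))
    (hinj : ∀ i ≤ ℓ, ∀ j ≤ ℓ, v i = v j → i = j)
    (hnotub : ¬ UnbarredOn v ℓ)
    (hk : UnbarredOn v k) (hk' : ¬ UnbarredOn v (k + 1)) :
    2 ≤ k ∧ k ≤ ℓ - 1 ∧ (v k).1 ≠ 0 ∧ (v k).2 ≠ 0 ∧
      (Paired s(v (k - 1), v k) s(v k, v (k + 1)) ∨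
        Paired s(v k, v (k + 1)) s(v (k - 1), v k)) := by
  obtain ⟨a, b, ha, hb, hstep⟩ := hk
  -- k < ℓ
  have hkl : k < ℓ := by
    by_contra h
    exact hnotub (unbarred_mono ⟨a, b, ha, hb, hstep⟩ (by omega))
  have hdk := hdir k hkl
  -- step k is not compatible with witnesses a, b
  have hnot : ¬ (v (k + 1) - v k = (a, 0) ∨ v (k + 1) - v k = (0, b)) := by
    intro h
    refine hk' ⟨a, b, ha, hb, fun i hi => ?_⟩
    rcases Nat.lt_or_ge i k with hik | hik
    · exact hstep i hik
    · have : i = k := by omega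
      subst this; exact h
  -- hence step k = (-a, 0) or (0, -b)
  have hdk' : v (k + 1) - v k = (-a, 0) ∨ v (k + 1) - v k = (0, -b) := by
    rcases ha with rfl | rfl <;> rcases hb with rfl | rfl <;>
      rcases hdk with h | h | h | h <;>
      first
        | exact absurd (Or.inl h) hnot
        | exact absurd (Or.inr h) hnot
        | (left; simpa using h)
        | (right; simpa using h)
  -- k ≥ 1
  have hk1 : 1 ≤ k := by
    by_contra h
    have hk0 : k = 0 := by omega
    subst hk0
    apply hk'
    rcases hdk with h | h | h | h
    · exact ⟨1, 1, Or.inl rfl, Or.inl rfl, fun i hi => by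
        have : i = 0 := by omega
        subst this; exact Or.inl h⟩
    · exact ⟨-1, 1, Or.inr rfl, Or.inl rfl, fun i hi => by
        have : i = 0 := by omega
        subst this; exact Or.inl h⟩
    · exact ⟨1, 1, Or.inl rfl, Or.inl rfl, fun i hi => by
        have : i = 0 := by omega
        subst this; exact Or.inr h⟩
    · exact ⟨1, -1, Or.inl rfl, Or.inr rfl, fun i hi => by
        have : i = 0 := by omega
        subst this; exact Or.inr h⟩
  have hkm : k - 1 + 1 = k := by omega
  have hstepkm := hstep (k - 1) (by omega)
  rw [hkm] at hstepkm
  have hna : -a = 1 ∨ -a = -1 := by rcases ha with rfl | rfl <;> simp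
  have hnb : -b = 1 ∨ -b = -1 := by rcases hb with rfl | rfl <;> simp
  have haa : a * a = 1 := by rcases ha with rfl | rfl <;> norm_num
  have hbb : b * b = 1 := by rcases hb with rfl | rfl <;> norm_num
  rcases hdk' with hC | hC
  · -- Case A: step k = (-a, 0)
    have hCc := comp_eq hC
    -- step (k-1) must be (0, b), else v (k+1) = v (k-1)
    have hkm1 : v k - v (k - 1) = (0, b) := by
      rcases hstepkm with h | h
      · exfalso
        have h2 := comp_eq h
        have heq : v (k + 1) = v (k - 1) := by
          refine Prod.ext_iff.mpr ⟨?_, ?_⟩ <;> omega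
        have := hinj (k + 1) (by omega) (k - 1) (by omega) heq
        omega
      · exact h
    have hkmc := comp_eq hkm1
    -- k ≥ 2
    have hk2 : 2 ≤ k := by
      by_contra h
      have : k = 1 := by omega
      subst this
      refine hk' ⟨-a, b, hna, hb, fun i hi => ?_⟩
      interval_cases i
      · exact Or.inr (by simpa using hkm1)
      · exact Or.inl hC
    -- there is a horizontal step before k
    have hhoriz : ∃ j < k, v (j + 1) - v j = (a, 0) := by
      by_contra h
      push_neg at h
      refine hk' ⟨-a, b, hna, hb, fun i hi => ?_⟩
      rcases Nat.lt_or_ge i k with hik | hik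
      · rcases hstep i hik with h' | h'
        · exact absurd h' (h i hik)
        · exact Or.inr h'
      · have : i = k := by omega
        subst this; exact Or.inl hC
    obtain ⟨j, hj, hjh⟩ := hhoriz
    -- positivity of a * x
    have hx : 1 ≤ a * (v k).1 := by
      have m0 : a * (v 0).1 ≤ a * (v j).1 := by
        have := mono_fst ha hstep 0 j (by omega)
        simpa using this
      have hs0 : a * (v 0).1 = 0 := by rw [hstart]; simp
      have hjc := (comp_eq hjh).1
      have m1 : a * (v (j + 1)).1 ≤ a * (v k).1 := by
        have := mono_fst ha hstep (j + 1) (k - (j + 1)) (by omega)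
        rwa [show j + 1 + (k - (j + 1)) = k from by omega] at this
      have : a * (v (j + 1)).1 = a * (v j).1 + 1 := by rw [hjc, mul_add, haa]
      omega
    -- positivity of b * y (step k-1 is vertical)
    have hy : 1 ≤ b * (v k).2 := by
      have m0 : b * (v 0).2 ≤ b * (v (k - 1)).2 := by
        have := mono_snd hb hstep 0 (k - 1) (by omega)
        simpa using this
      have hs0 : b * (v 0).2 = 0 := by rw [hstart]; simp
      have : b * (v k).2 = b * (v (k - 1)).2 + 1 := by
        rw [hkmc.2, mul_add, hbb]
      omega
    have hx0 : (v k).1 ≠ 0 := by rcases ha with rfl | rfl <;> omega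
    have hy0 : (v k).2 ≠ 0 := by rcases hb with rfl | rfl <;> omega
    have hsx : Int.sign (v k).1 = a := by
      rcases ha with rfl | rfl
      · exact Int.sign_eq_one_iff_pos.mpr (by omega)
      · exact Int.sign_eq_neg_one_iff_neg.mpr (by omega)
    have hsy : Int.sign (v k).2 = b := by
      rcases hb with rfl | rfl
      · exact Int.sign_eq_one_iff_pos.mpr (by omega)
      · exact Int.sign_eq_neg_one_iff_neg.mpr (by omega)
    refine ⟨hk2, by omega, hx0, hy0, Or.inl ⟨(v k).1, (v k).2, hx0, hy0, ?_, ?_⟩⟩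
    · rw [hsy]
      have e1 : v (k - 1) = ((v k).1, (v k).2 - b) := by
        refine Prod.ext_iff.mpr ⟨?_, ?_⟩ <;> omega
      rw [e1]
      exact Sym2.eq_swap
    · rw [hsx]
      have e2 : v (k + 1) = ((v k).1 - a, (v k).2) := by
        refine Prod.ext_iff.mpr ⟨?_, ?_⟩ <;> omega
      rw [e2]
  · -- Case B: step k = (0, -b)
    have hCc := comp_eq hC
    -- step (k-1) must be (a, 0), else v (k+1) = v (k-1)
    have hkm1 : v k - v (k - 1) = (a, 0) := by
      rcases hstepkm with h | h
      · exact h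
      · exfalso
        have h2 := comp_eq h
        have heq : v (k + 1) = v (k - 1) := by
          refine Prod.ext_iff.mpr ⟨?_, ?_⟩ <;> omega
        have := hinj (k + 1) (by omega) (k - 1) (by omega) heq
        omega
    have hkmc := comp_eq hkm1
    -- k ≥ 2
    have hk2 : 2 ≤ k := by
      by_contra h
      have : k = 1 := by omega
      subst this
      refine hk' ⟨a, -b, ha, hnb, fun i hi => ?_⟩
      interval_cases i
      · exact Or.inl (by simpa using hkm1)
      · exact Or.inr hC
    -- there is a vertical step before k
    have hvert : ∃ j < k, v (j + 1) - v j = (0, b) := by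
      by_contra h
      push_neg at h
      refine hk' ⟨a, -b, ha, hnb, fun i hi => ?_⟩
      rcases Nat.lt_or_ge i k with hik | hik
      · rcases hstep i hik with h' | h'
        · exact Or.inl h'
        · exact absurd h' (h i hik)
      · have : i = k := by omega
        subst this; exact Or.inr hC
    obtain ⟨j, hj, hjv⟩ := hvert
    have hy : 1 ≤ b * (v k).2 := by
      have m0 : b * (v 0).2 ≤ b * (v j).2 := by
        have := mono_snd hb hstep 0 j (by omega)
        simpa using this
      have hs0 : b * (v 0).2 = 0 := by rw [hstart]; simp
      have hjc := (comp_eq hjv).2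
      have m1 : b * (v (j + 1)).2 ≤ b * (v k).2 := by
        have := mono_snd hb hstep (j + 1) (k - (j + 1)) (by omega)
        rwa [show j + 1 + (k - (j + 1)) = k from by omega] at this
      have : b * (v (j + 1)).2 = b * (v j).2 + 1 := by rw [hjc, mul_add, hbb]
      omega
    have hx : 1 ≤ a * (v k).1 := by
      have m0 : a * (v 0).1 ≤ a * (v (k - 1)).1 := by
        have := mono_fst ha hstep 0 (k - 1) (by omega)
        simpa using this
      have hs0 : a * (v 0).1 = 0 := by rw [hstart]; simp
      have : a * (v k).1 = a * (v (k - 1)).1 + 1 := by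
        rw [hkmc.1, mul_add, haa]
      omega
    have hx0 : (v k).1 ≠ 0 := by rcases ha with rfl | rfl <;> omega
    have hy0 : (v k).2 ≠ 0 := by rcases hb with rfl | rfl <;> omega
    have hsx : Int.sign (v k).1 = a := by
      rcases ha with rfl | rfl
      · exact Int.sign_eq_one_iff_pos.mpr (by omega)
      · exact Int.sign_eq_neg_one_iff_neg.mpr (by omega)
    have hsy : Int.sign (v k).2 = b := by
      rcases hb with rfl | rfl
      · exact Int.sign_eq_one_iff_pos.mpr (by omega)
      · exact Int.sign_eq_neg_one_iff_neg.mpr (by omega)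
    refine ⟨hk2, by omega, hx0, hy0, Or.inr ⟨(v k).1, (v k).2, hx0, hy0, ?_, ?_⟩⟩
    · rw [hsy]
      have e1 : v (k + 1) = ((v k).1, (v k).2 - b) := by
        refine Prod.ext_iff.mpr ⟨?_, ?_⟩ <;> omega
      rw [e1]
    · rw [hsx]
      have e2 : v (k - 1) = ((v k).1 - a, (v k).2) := by
        refine Prod.ext_iff.mpr ⟨?_, ?_⟩ <;> omega
      rw [e2]
      exact Sym2.eq_swap
end

section
/- Let C be a finite connected subgraph of Z^2 and let e = {u,v} ∈ ∂C be a boundary edge with u ∈ V(C). Classify boundary edges: e is awful for C if |∂(C+e)| − |∂C| ≤ 1. Then for any ℓ ≥ 1 and any edge f that is awful for C, if f ∈ ∂(C+e) (f is not the added edge e), then f is also awful for C+e. -/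
open SimpleGraph

/-- An edge `f = {a,b}` in the boundary of `C` is awful for `C` if adding it
increases the boundary by at most `1`. -/
def AwfulFor (C : Grid.Subgraph) {a b : ℤ × ℤ} (hf : Grid.Adj a b) : Prop :=
  s(a, b) ∈ edgeBoundary C ∧
    (edgeBoundary (C ⊔ Grid.subgraphOfAdj hf)).ncard
      ≤ (edgeBoundary C).ncard + 1

/-!
Adding a boundary edge `f` to `H` removes `f` from the boundary and adds the *new* boundary
edges, those at the endpoints of `f` that were not boundary edges of `H`; so `f` is awful exactly
when at most two edges are new. Enlarging `H` can only shrink this set of new edges: an edge that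
is new for the larger graph touches none of its vertices, hence none of the vertices of `H`.
-/

lemma grid_neighborSet_finite (w : ℤ × ℤ) : (Grid.neighborSet w).Finite := by
  refine (Set.finite_Icc (w - (1, 1)) (w + (1, 1))).subset fun x hx => ?_
  have hx : |w.1 - x.1| + |w.2 - x.2| = 1 := hx
  have h1 := abs_le.mp (show |w.1 - x.1| ≤ 1 by linarith [abs_nonneg (w.2 - x.2)])
  have h2 := abs_le.mp (show |w.2 - x.2| ≤ 1 by linarith [abs_nonneg (w.1 - x.1)])
  simp only [Set.mem_Icc, Prod.le_def, Prod.fst_sub, Prod.snd_sub, Prod.fst_add, Prod.snd_add]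
  omega

lemma edgeBoundary_finite {H : Grid.Subgraph} (hH : H.verts.Finite) :
    (edgeBoundary H).Finite := by
  refine (hH.biUnion fun w _ => (grid_neighborSet_finite w).image (s(w, ·))).subset ?_
  rintro g ⟨hg, -, w, hw, hwg⟩
  obtain ⟨x, rfl⟩ := Sym2.mem_iff_exists.mp hwg
  exact Set.mem_biUnion hw ⟨x, hg, rfl⟩

lemma verts_sup_subgraphOfAdj_finite {H : Grid.Subgraph} (hH : H.verts.Finite)
    {a b : ℤ × ℤ} (hab : Grid.Adj a b) : (H ⊔ Grid.subgraphOfAdj hab).verts.Finite := by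
  rw [Subgraph.verts_sup, subgraphOfAdj_verts]
  exact hH.union (Set.toFinite _)

lemma edgeBoundary_sup_inter_edgeBoundary {H : Grid.Subgraph} {a b : ℤ × ℤ}
    (hab : Grid.Adj a b) :
    edgeBoundary (H ⊔ Grid.subgraphOfAdj hab) ∩ edgeBoundary H =
      edgeBoundary H \ {s(a, b)} := by
  ext g
  simp only [edgeBoundary, Set.mem_inter_iff, Set.mem_sdiff, Set.mem_ofPred_eq,
    Set.mem_singleton_iff, Subgraph.edgeSet_sup, edgeSet_subgraphOfAdj, Set.mem_union,
    Subgraph.verts_sup]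
  constructor
  · rintro ⟨⟨-, hg, -⟩, hgH⟩
    exact ⟨hgH, fun hgf => hg (Or.inr hgf)⟩
  · rintro ⟨⟨hg, hgH, w, hw, hwg⟩, hgf⟩
    exact ⟨⟨hg, by tauto, w, Or.inl hw, hwg⟩, hg, hgH, w, hw, hwg⟩

lemma ncard_edgeBoundary_sup_add_one {H : Grid.Subgraph} (hH : H.verts.Finite)
    {a b : ℤ × ℤ} (hab : Grid.Adj a b) (hf : s(a, b) ∈ edgeBoundary H) :
    (edgeBoundary (H ⊔ Grid.subgraphOfAdj hab)).ncard + 1 =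
      (edgeBoundary H).ncard +
        (edgeBoundary (H ⊔ Grid.subgraphOfAdj hab) \ edgeBoundary H).ncard := by
  rw [← Set.ncard_inter_add_ncard_sdiff_eq_ncard _ (edgeBoundary H)
    (edgeBoundary_finite (verts_sup_subgraphOfAdj_finite hH hab)),
    edgeBoundary_sup_inter_edgeBoundary hab,
    ← Set.ncard_sdiff_singleton_add_one hf (edgeBoundary_finite hH)]
  ring

lemma awfulFor_iff {H : Grid.Subgraph} (hH : H.verts.Finite) {a b : ℤ × ℤ}
    (hab : Grid.Adj a b) :
    AwfulFor H hab ↔ s(a, b) ∈ edgeBoundary H ∧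
      (edgeBoundary (H ⊔ Grid.subgraphOfAdj hab) \ edgeBoundary H).ncard ≤ 2 := by
  refine and_congr_right fun hf => ?_
  have := ncard_edgeBoundary_sup_add_one hH hab hf
  omega

lemma edgeBoundary_sup_sdiff_subset_of_le {H H' : Grid.Subgraph} (hle : H ≤ H')
    {a b : ℤ × ℤ} (hab : Grid.Adj a b) :
    edgeBoundary (H' ⊔ Grid.subgraphOfAdj hab) \ edgeBoundary H' ⊆
      edgeBoundary (H ⊔ Grid.subgraphOfAdj hab) \ edgeBoundary H := by
  rintro g ⟨⟨hg, hgH'f, w, hw, hwg⟩, hgH'⟩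
  have hgH'e : g ∉ H'.edgeSet := fun h => hgH'f (Subgraph.edgeSet_mono le_sup_left h)
  have hH'g : ∀ x ∈ H'.verts, x ∉ g := fun x hx hxg => hgH' ⟨hg, hgH'e, x, hx, hxg⟩
  refine ⟨⟨hg, ?_, w, ?_, hwg⟩, fun ⟨_, _, x, hx, hxg⟩ => hH'g x (hle.1 hx) hxg⟩
  · rw [Subgraph.edgeSet_sup] at hgH'f ⊢
    rintro (hgH | hgf)
    · exact hgH'e (Subgraph.edgeSet_mono hle hgH)
    · exact hgH'f (Or.inr hgf)
  · rw [Subgraph.verts_sup] at hw ⊢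
    exact Or.inr (hw.resolve_left fun hw => hH'g w hw hwg)

theorem awful_stays_awful_general (C : Grid.Subgraph)
    (hfin : C.verts.Finite) (u v : ℤ × ℤ) (h : Grid.Adj u v)
    {a b : ℤ × ℤ} (hf : Grid.Adj a b)
    (hawful : AwfulFor C hf)
    (hstill : s(a, b) ∈ edgeBoundary (C ⊔ Grid.subgraphOfAdj h)) :
    AwfulFor (C ⊔ Grid.subgraphOfAdj h) hf := by
  rw [awfulFor_iff hfin] at hawful
  rw [awfulFor_iff (verts_sup_subgraphOfAdj_finite hfin h)]
  exact ⟨hstill, (Set.ncard_le_ncard (edgeBoundary_sup_sdiff_subset_of_le le_sup_left hf)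
    (edgeBoundary_finite (verts_sup_subgraphOfAdj_finite hfin hf)).sdiff).trans hawful.2⟩

/-- Observation 4.5 (first half): if `f` is awful for `C` and remains a boundary
edge after Maker adds a boundary edge `e = {u,v}` to `C`, then `f` is awful for
`C + e`. -/
theorem awful_stays_awful (C : Grid.Subgraph) (hconn : C.Connected)
    (hfin : C.verts.Finite) (u v : ℤ × ℤ) (h : Grid.Adj u v)
    (he : s(u, v) ∈ edgeBoundary C) {a b : ℤ × ℤ} (hf : Grid.Adj a b)
    (hawful : AwfulFor C hf)
    (hstill : s(a, b) ∈ edgeBoundary (C ⊔ Grid.subgraphOfAdj h)) :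
    AwfulFor (C ⊔ Grid.subgraphOfAdj h) hf :=
  awful_stays_awful_general C hfin u v h hf hawful hstill
end
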